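/- arXiv:1804.00777 — 4 statements merged into one kernel-verified Lean document; each statement's English description precedes it below -/
import Mathlib

section
/- For |q|<1 and |z|<1: ∑_{n=0}^∞ z^n q^{2n²+2n+1} / ((q;q²)_{n+1} (zq;q²)_{n+1}) = ∑_{n=1}^∞ z^{n-1} q^n / (q;q²)_n. -/
noncomputable def qPoch (a q : ℂ) (n : ℕ) : ℂ := ∏ i ∈ Finset.range n, (1 - a * q ^ i)

noncomputable def qPochInf (a q : ℂ) : ℂ := ∏' i : ℕ, (1 - a * q ^ i)

noncomputable def qBinom (q : ℂ) (m k : ℕ) : ℂ :=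
  if k ≤ m then qPoch q q m / (qPoch q q k * qPoch q q (m - k)) else 0

/-! Expanding `1 / (zq; q²)_{n+1}` by the `q`-binomial theorem as `∑ₘ [n + m, n]_{q²} (zq)ᵐ` turns
the left side into a double series, absolutely convergent thanks to the factor `q^{2n²}`.
Summing it along the antidiagonals `n + m = N` and multiplying by `(q; q²)_{N+1}`, the coefficient
of `z^N` becomes `q^{N+1}` times `∑_{n+m=N} [N, n]_Q Q^{n²} qⁿ (q Q^{n+1}; Q)_m` with `Q = q²`.
This is the total mass of a `q`-binomial distribution, hence `1`: by Pascal's rule, the sum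
`G_N(x)` with `q` replaced by `x` satisfies
`G_{N+1}(x) = (1 - x Q^{N+1}) G_N(x) + x Q^{N+1} G_N(x Q)`. -/

open Finset

/-- `gaussBinom Q n m` is the Gaussian binomial coefficient `[n + m, n]_Q`; indexing by the two
parts of `n + m` avoids natural-number subtraction. -/
def gaussBinom {R : Type*} [CommSemiring R] (Q : R) : ℕ → ℕ → R
  | 0, _ => 1
  | _ + 1, 0 => 1
  | n + 1, m + 1 => Q ^ (m + 1) * gaussBinom Q n (m + 1) + gaussBinom Q (n + 1) m

section GaussBinom

variable {R : Type*} [CommSemiring R] (Q : R)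

@[simp] lemma gaussBinom_zero_left (m : ℕ) : gaussBinom Q 0 m = 1 := by
  rw [gaussBinom]

@[simp] lemma gaussBinom_zero_right (n : ℕ) : gaussBinom Q n 0 = 1 := by
  cases n <;> rw [gaussBinom]

lemma gaussBinom_succ_succ (n m : ℕ) :
    gaussBinom Q (n + 1) (m + 1) =
      Q ^ (m + 1) * gaussBinom Q n (m + 1) + gaussBinom Q (n + 1) m := by
  rw [gaussBinom]

lemma sum_antidiagonal_succ_gaussBinom_mul (h : ℕ × ℕ → R) (N : ℕ) :
    ∑ p ∈ antidiagonal (N + 1), gaussBinom Q p.1 p.2 * h p =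
      ∑ p ∈ antidiagonal N,
        gaussBinom Q p.1 p.2 * (Q ^ p.2 * h (p.1 + 1, p.2) + h (p.1, p.2 + 1)) := by
  cases N with
  | zero => simp [Nat.sum_antidiagonal_succ, add_comm]
  | succ N =>
    simp only [mul_add, sum_add_distrib]
    rw [Nat.sum_antidiagonal_succ, Nat.sum_antidiagonal_succ', Nat.sum_antidiagonal_succ',
      Nat.sum_antidiagonal_succ (f := fun p => gaussBinom Q p.1 p.2 * h (p.1, p.2 + 1))]
    simp only [gaussBinom_succ_succ, gaussBinom_zero_left, gaussBinom_zero_right, add_mul,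
      sum_add_distrib]
    ring_nf

end GaussBinom

lemma qPoch_succ (a Q : ℂ) (n : ℕ) : qPoch a Q (n + 1) = qPoch a Q n * (1 - a * Q ^ n) :=
  prod_range_succ _ n

lemma qPoch_succ' (a Q : ℂ) (n : ℕ) : qPoch a Q (n + 1) = (1 - a) * qPoch (a * Q) Q n := by
  simp only [qPoch, prod_range_succ', pow_succ, pow_zero, mul_one, mul_assoc, mul_comm]

lemma qPoch_add (a Q : ℂ) (n m : ℕ) :
    qPoch a Q (n + m) = qPoch a Q n * qPoch (a * Q ^ n) Q m := by
  simp only [qPoch, prod_range_add, pow_add, mul_assoc]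

theorem sum_antidiagonal_gaussBinom_mul_qPoch (Q : ℂ) (N : ℕ) (x : ℂ) :
    ∑ p ∈ antidiagonal N,
      gaussBinom Q p.1 p.2 * (Q ^ (p.1 ^ 2) * x ^ p.1 * qPoch (x * Q ^ (p.1 + 1)) Q p.2) = 1 := by
  induction N generalizing x with
  | zero => simp [qPoch]
  | succ N ih =>
    have step : ∀ p ∈ antidiagonal N,
        gaussBinom Q p.1 p.2 * (Q ^ p.2 * (Q ^ ((p.1 + 1) ^ 2) * x ^ (p.1 + 1) *
          qPoch (x * Q ^ (p.1 + 1 + 1)) Q p.2) +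
          Q ^ (p.1 ^ 2) * x ^ p.1 * qPoch (x * Q ^ (p.1 + 1)) Q (p.2 + 1)) =
        (1 - x * Q ^ (N + 1)) * (gaussBinom Q p.1 p.2 *
          (Q ^ (p.1 ^ 2) * x ^ p.1 * qPoch (x * Q ^ (p.1 + 1)) Q p.2)) +
        x * Q ^ (N + 1) * (gaussBinom Q p.1 p.2 *
          (Q ^ (p.1 ^ 2) * (x * Q) ^ p.1 * qPoch (x * Q * Q ^ (p.1 + 1)) Q p.2)) := by
      rintro ⟨i, j⟩ hij
      rw [HasAntidiagonal.mem_antidiagonal] at hij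
      subst hij
      rw [qPoch_succ, show x * Q ^ (i + 1 + 1) = x * Q * Q ^ (i + 1) by ring]
      ring
    rw [sum_antidiagonal_succ_gaussBinom_mul, sum_congr rfl step, sum_add_distrib, ← mul_sum,
      ← mul_sum, ih, ih]
    ring

lemma pow_le_norm_qPoch {a Q : ℂ} (ha : ‖a‖ ≤ 1) (hQ : ‖Q‖ ≤ 1) (n : ℕ) :
    (1 - ‖a‖) ^ n ≤ ‖qPoch a Q n‖ := by
  rw [qPoch, norm_prod, ← card_range n, ← prod_const, card_range]
  refine prod_le_prod (fun _ _ => sub_nonneg.2 ha) fun i _ => ?_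
  calc 1 - ‖a‖ ≤ ‖(1 : ℂ)‖ - ‖a * Q ^ i‖ := by
        rw [norm_one, norm_mul, norm_pow]
        gcongr
        exact mul_le_of_le_one_right (norm_nonneg a) (pow_le_one₀ (norm_nonneg Q) hQ)
    _ ≤ ‖1 - a * Q ^ i‖ := norm_sub_norm_le _ _

lemma qPoch_ne_zero {a Q : ℂ} (ha : ‖a‖ < 1) (hQ : ‖Q‖ ≤ 1) (n : ℕ) : qPoch a Q n ≠ 0 :=
  norm_pos_iff.1 <| (pow_pos (sub_pos.2 ha) n).trans_le (pow_le_norm_qPoch ha.le hQ n)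

lemma norm_gaussBinom_le {Q : ℂ} (hQ : ‖Q‖ ≤ 1) :
    ∀ n m : ℕ, ‖gaussBinom Q n m‖ ≤ (m + n).choose n
  | 0, m => by simp
  | n + 1, 0 => by simp
  | n + 1, m + 1 => by
    rw [gaussBinom_succ_succ, show m + 1 + (n + 1) = m + n + 1 + 1 by ring, Nat.choose_succ_succ,
      Nat.cast_add]
    refine (norm_add_le _ _).trans (add_le_add ?_ ?_)
    · rw [norm_mul, norm_pow, show m + n + 1 = m + 1 + n by ring]
      exact (mul_le_of_le_one_left (norm_nonneg _) (pow_le_one₀ (norm_nonneg Q) hQ)).trans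
        (norm_gaussBinom_le hQ n (m + 1))
    · rw [show m + n + 1 = m + (n + 1) by ring]
      exact norm_gaussBinom_le hQ (n + 1) m

lemma summable_gaussBinom_mul_pow {Q a : ℂ} (hQ : ‖Q‖ ≤ 1) (ha : ‖a‖ < 1) (n : ℕ) :
    Summable fun m => gaussBinom Q n m * a ^ m := by
  refine Summable.of_norm_bounded
    (summable_choose_mul_geometric_of_norm_lt_one n (r := ‖a‖) (by simpa using ha)) fun m => ?_
  rw [norm_mul, norm_pow]
  exact mul_le_mul_of_nonneg_right (norm_gaussBinom_le hQ n m) (by positivity)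

theorem hasSum_gaussBinom_mul_pow {Q : ℂ} (hQ : ‖Q‖ ≤ 1) (n : ℕ) :
    ∀ {a : ℂ}, ‖a‖ < 1 →
      HasSum (fun m => gaussBinom Q n m * a ^ m) (qPoch a Q (n + 1))⁻¹ := by
  induction n with
  | zero =>
    intro a ha
    simpa [qPoch] using hasSum_geometric_of_norm_lt_one ha
  | succ n ih =>
    intro a ha
    have haQ : ‖a * Q‖ < 1 := by
      rw [norm_mul]; exact (mul_le_of_le_one_right (norm_nonneg a) hQ).trans_lt ha
    have hf := (summable_gaussBinom_mul_pow hQ ha (n + 1)).hasSum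
    set S := ∑' m, gaussBinom Q (n + 1) m * a ^ m
    have hshift : HasSum (fun m => gaussBinom Q (n + 1) (m + 1) * a ^ (m + 1)) (S - 1) := by
      simpa using (hasSum_nat_add_iff' 1).2 hf
    have hrec : HasSum (fun m => gaussBinom Q (n + 1) (m + 1) * a ^ (m + 1))
        ((qPoch (a * Q) Q (n + 1))⁻¹ - 1 + a * S) := by
      have h := ((hasSum_nat_add_iff' 1).2 (ih haQ)).add (hf.mul_left a)
      simp only [sum_range_one, gaussBinom_zero_right, pow_zero, mul_one] at h
      refine h.congr_fun fun m => ?_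
      rw [gaussBinom_succ_succ]
      ring
    have ha1 : 1 - a ≠ 0 := sub_ne_zero.2 fun h => by simp [← h] at ha
    have hS : S = (qPoch a Q (n + 1 + 1))⁻¹ := by
      rw [qPoch_succ', mul_inv, eq_inv_mul_iff_mul_eq₀ ha1]
      linear_combination hshift.unique hrec
    rwa [← hS]

theorem HasSum.sum_antidiagonal {α A : Type*} [AddCommMonoid α] [TopologicalSpace α]
    [ContinuousAdd α] [RegularSpace α] [AddMonoid A] [HasAntidiagonal A] {f : A × A → α} {a : α}
    (h : HasSum f a) : HasSum (fun n => ∑ p ∈ antidiagonal n, f p) a :=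
  (HasAntidiagonal.sigmaAntidiagonalEquivProd.hasSum_iff.2 h).sigma fun n =>
    (antidiagonal n).hasSum f

lemma summable_pow_sq_mul_pow {s : ℝ} (hs0 : 0 ≤ s) (hs : s < 1) (K : ℝ) :
    Summable fun n : ℕ => s ^ (n ^ 2) * K ^ n := by
  have hlim : Filter.Tendsto (fun n : ℕ => s ^ n * |K|) Filter.atTop (nhds 0) := by
    simpa using (tendsto_pow_atTop_nhds_zero_of_lt_one hs0 hs).mul_const |K|
  have hsmall := hlim.eventually (ge_mem_nhds (by norm_num : (0 : ℝ) < 1 / 2))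
  refine summable_geometric_two.of_norm_bounded_eventually_nat (hsmall.mono fun n hn => ?_)
  rw [norm_mul, norm_pow, norm_pow, Real.norm_of_nonneg hs0, Real.norm_eq_abs, sq, pow_mul,
    ← mul_pow]
  exact pow_le_pow_left₀ (by positivity) hn n

lemma summable_mul_gaussBinom_mul_pow {Q w : ℂ} {a : ℕ → ℂ} (hQ : ‖Q‖ ≤ 1) (hw : ‖w‖ < 1)
    (ha : Summable fun n => ‖a n‖ / (1 - ‖w‖) ^ (n + 1)) :
    Summable fun p : ℕ × ℕ => a p.1 * (gaussBinom Q p.1 p.2 * w ^ p.2) := by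
  have hw' : ‖‖w‖‖ < 1 := by simpa using hw
  refine Summable.of_norm_bounded (g := fun p => ‖a p.1‖ * ((p.2 + p.1).choose p.1 * ‖w‖ ^ p.2))
    ((summable_prod_of_nonneg fun _ => by positivity).2 ⟨fun n => ?_, ?_⟩) fun p => ?_
  · exact (summable_choose_mul_geometric_of_norm_lt_one n hw').mul_left ‖a n‖
  · simpa only [tsum_mul_left, tsum_choose_mul_geometric_of_norm_lt_one _ hw', mul_one_div]
      using ha
  · rw [norm_mul, norm_mul, norm_pow]
    gcongr
    exact norm_gaussBinom_le hQ p.1 p.2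

section Identity

variable {q z : ℂ}

lemma summable_norm_pow_mul_pow_div_qPoch (hq : ‖q‖ < 1) (hz : ‖z‖ < 1) {r : ℝ} (hr : r < 1) :
    Summable fun n : ℕ =>
      ‖z ^ n * q ^ (2 * n ^ 2 + 2 * n + 1) / qPoch q (q ^ 2) (n + 1)‖ / (1 - r) ^ (n + 1) := by
  have hQ : ‖q ^ 2‖ ≤ 1 := (norm_pow q 2).trans_le (pow_le_one₀ (norm_nonneg q) hq.le)
  have h1 : 0 < 1 - ‖q‖ := sub_pos.2 hq
  have h2 : 0 < 1 - r := sub_pos.2 hr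
  set t := (1 - ‖q‖) * (1 - r) with ht
  have ht0 : t ≠ 0 := by positivity
  refine Summable.of_nonneg_of_le (fun n => by positivity) (fun n => ?_)
    ((summable_pow_sq_mul_pow (sq_nonneg ‖q‖) (pow_lt_one₀ (norm_nonneg q) hq two_ne_zero)
      (‖q‖ ^ 2 / t)).mul_left (‖q‖ / t))
  calc ‖z ^ n * q ^ (2 * n ^ 2 + 2 * n + 1) / qPoch q (q ^ 2) (n + 1)‖ / (1 - r) ^ (n + 1)
      = ‖z‖ ^ n * ‖q‖ ^ (2 * n ^ 2 + 2 * n + 1) /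
          (‖qPoch q (q ^ 2) (n + 1)‖ * (1 - r) ^ (n + 1)) := by
        rw [norm_div, norm_mul, norm_pow, norm_pow, div_div]
    _ ≤ 1 * ‖q‖ ^ (2 * n ^ 2 + 2 * n + 1) / t ^ (n + 1) := by
        rw [ht, mul_pow]
        gcongr
        · exact pow_le_one₀ (norm_nonneg z) hz.le
        · exact pow_le_norm_qPoch hq.le hQ (n + 1)
    _ = ‖q‖ / t * ((‖q‖ ^ 2) ^ (n ^ 2) * (‖q‖ ^ 2 / t) ^ n) := by
        rw [div_pow]
        field_simp
        ring

lemma mul_gaussBinom_eq_div_qPoch_mul (hq : ‖q‖ < 1) (n m : ℕ) :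
    z ^ n * q ^ (2 * n ^ 2 + 2 * n + 1) / qPoch q (q ^ 2) (n + 1) *
        (gaussBinom (q ^ 2) n m * (z * q) ^ m) =
      z ^ (n + m) * q ^ (n + m + 1) / qPoch q (q ^ 2) (n + m + 1) *
        (gaussBinom (q ^ 2) n m *
          ((q ^ 2) ^ (n ^ 2) * q ^ n * qPoch (q * (q ^ 2) ^ (n + 1)) (q ^ 2) m)) := by
  have hQ : ‖q ^ 2‖ ≤ 1 := (norm_pow q 2).trans_le (pow_le_one₀ (norm_nonneg q) hq.le)
  have h1 := qPoch_ne_zero hq hQ (n + 1)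
  have h2 : qPoch (q * (q ^ 2) ^ (n + 1)) (q ^ 2) m ≠ 0 := by
    refine qPoch_ne_zero ?_ hQ m
    rw [norm_mul, norm_pow]
    exact mul_lt_one_of_nonneg_of_lt_one_left (norm_nonneg q) hq (pow_le_one₀ (norm_nonneg _) hQ)
  rw [show n + m + 1 = n + 1 + m by ring, qPoch_add q (q ^ 2) (n + 1) m]
  field_simp
  ring

end Identity

theorem stmt_0 (q z : ℂ) (hq : ‖q‖ < 1) (hz : ‖z‖ < 1) :
    ∑' n : ℕ, z ^ n * q ^ (2 * n ^ 2 + 2 * n + 1) /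
      (qPoch q (q ^ 2) (n + 1) * qPoch (z * q) (q ^ 2) (n + 1)) =
    ∑' n : ℕ, z ^ n * q ^ (n + 1) / qPoch q (q ^ 2) (n + 1) := by
  have hQ : ‖q ^ 2‖ ≤ 1 := (norm_pow q 2).trans_le (pow_le_one₀ (norm_nonneg q) hq.le)
  have hzq : ‖z * q‖ < 1 := by
    rw [norm_mul]; exact mul_lt_one_of_nonneg_of_lt_one_left (norm_nonneg z) hz hq.le
  have hsum := (summable_mul_gaussBinom_mul_pow hQ hzq
    (summable_norm_pow_mul_pow_div_qPoch hq hz hzq)).hasSum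
  have hrows : ∀ n : ℕ, HasSum (fun m => z ^ n * q ^ (2 * n ^ 2 + 2 * n + 1) /
      qPoch q (q ^ 2) (n + 1) * (gaussBinom (q ^ 2) n m * (z * q) ^ m))
      (z ^ n * q ^ (2 * n ^ 2 + 2 * n + 1) /
        (qPoch q (q ^ 2) (n + 1) * qPoch (z * q) (q ^ 2) (n + 1))) := fun n => by
    rw [← div_div, div_eq_mul_inv _ (qPoch (z * q) _ _)]
    exact (hasSum_gaussBinom_mul_pow hQ n hzq).mul_left _
  rw [(hsum.prod_fiberwise hrows).tsum_eq, ← hsum.sum_antidiagonal.tsum_eq]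
  refine tsum_congr fun N => ?_
  rw [sum_congr rfl fun p hp => by
    rw [mul_gaussBinom_eq_div_qPoch_mul hq, HasAntidiagonal.mem_antidiagonal.1 hp], ← mul_sum,
    sum_antidiagonal_gaussBinom_mul_qPoch, mul_one]
end

section
/- The pair α_n(y) = y^n q^{n(n-1)/2} and β_n(y) = ((-q;q)_n (-y;q)_n / (yq;q)_{2n}) · ∑_{k=0}^n q^{2k} (y/q;q)_{2k} / ((q²;q²)_k (y²;q²)_k) is a Bailey pair relative to y, i.e. β_n(y) = ∑_{k=0}^n α_k(y) / ((q;q)_{n-k} (yq;q)_{n+k}). -/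
/-!
Write `β_n = P_n · ∑_{k ≤ n} t_k` and `r(n, k) = α_k / ((q;q)_{n-k} (yq;q)_{n+k})`, and proceed by
induction on `n`. The prefactor satisfies `P_{n+1} = c_n P_n` with
`c_n = (1 + q^{n+1})(1 + y q^n) / ((1 - y q^{2n+1})(1 - y q^{2n+2}))`. The Bailey sum satisfies the
same recurrence up to a telescoping term: with the rational certificate
`R(n, k) = N(q^n, q^k) / (q^k (1 - y q^{2n+1})(1 - y q^{2n+2}))`, `N` quadratic in `q^k`, and
`G(n, k) = r(n+1, k) R(n, k)`, one has
`r(n+1, k) = c_n r(n, k) + G(n, k) - G(n, k+1)` for `k ≤ n`. Summing over `k`, the boundary term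
`G(n, n+1)` equals `r(n+1, n+1)` and the other one, `G(n, 0)`, equals the new term `P_{n+1} t_{n+1}`.
-/

namespace BaileyPair

theorem qPoch_zero (a q : ℂ) : qPoch a q 0 = 1 := Finset.prod_range_zero _

theorem qPoch_succ (a q : ℂ) (n : ℕ) : qPoch a q (n + 1) = qPoch a q n * (1 - a * q ^ n) :=
  Finset.prod_range_succ _ _

theorem qPoch_succ' (a q : ℂ) (n : ℕ) : qPoch a q (n + 1) = (1 - a) * qPoch (a * q) q n := by
  simp only [qPoch, Finset.prod_range_succ', pow_zero, mul_one, pow_succ', mul_assoc, mul_comm]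

theorem qPoch_sq (a q : ℂ) (n : ℕ) : qPoch (a ^ 2) (q ^ 2) n = qPoch a q n * qPoch (-a) q n := by
  simp only [qPoch, ← Finset.prod_mul_distrib]
  exact Finset.prod_congr rfl fun i _ => by ring

theorem qPoch_ne_zero {a q : ℂ} {n : ℕ} (h : ∀ i, 1 - a * q ^ i ≠ 0) : qPoch a q n ≠ 0 :=
  Finset.prod_ne_zero_iff.mpr fun i _ => h i

theorem one_sub_mul_pow_ne_zero {y q : ℂ} {i : ℕ} (h : y ≠ q ^ (-(i : ℤ))) : 1 - y * q ^ i ≠ 0 := by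
  rw [zpow_neg, zpow_natCast] at h
  exact fun h' => h (eq_inv_of_mul_eq_one_left (sub_eq_zero.mp h').symm)

theorem one_add_mul_pow_ne_zero {y q : ℂ} {i : ℕ} (h : y ≠ -q ^ (-(i : ℤ))) : 1 + y * q ^ i ≠ 0 := by
  rw [zpow_neg, zpow_natCast] at h
  refine fun h' => h (neg_eq_iff_eq_neg.mp (eq_inv_of_mul_eq_one_left ?_))
  linear_combination -h'

theorem pow_succ_ne_of_norm_lt_one {q z : ℂ} (hq : ‖q‖ < 1) (hz : ‖z‖ = 1) (i : ℕ) :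
    q ^ (i + 1) ≠ z := by
  rintro rfl
  rw [norm_pow] at hz
  exact (pow_lt_one₀ (norm_nonneg q) hq i.succ_ne_zero).ne hz

variable (q y : ℂ)

noncomputable def betaPrefactor (n : ℕ) : ℂ :=
  qPoch (-q) q n * qPoch (-y) q n / qPoch (y * q) q (2 * n)

noncomputable def betaSummand (k : ℕ) : ℂ :=
  q ^ (2 * k) * qPoch (y / q) q (2 * k) / (qPoch (q ^ 2) (q ^ 2) k * qPoch (y ^ 2) (q ^ 2) k)

noncomputable def baileySummand (n k : ℕ) : ℂ :=
  y ^ k * q ^ (k * (k - 1) / 2) / (qPoch q q (n - k) * qPoch (y * q) q (n + k))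

noncomputable def prefactorRatio (n : ℕ) : ℂ :=
  (1 + q ^ (n + 1)) * (1 + y * q ^ n) / ((1 - y * q ^ (2 * n + 1)) * (1 - y * q ^ (2 * n + 2)))

def certificateNum (m x : ℂ) : ℂ :=
  q * m * (1 + q * m) - q * m * (1 + y * (1 + q) * m + y * q ^ 2 * m ^ 2) * x +
    y * q ^ 2 * m ^ 2 * (1 + y * m) * x ^ 2

noncomputable def certificate (n k : ℕ) : ℂ :=
  certificateNum q y (q ^ n) (q ^ k) /
    (q ^ k * ((1 - y * q ^ (2 * n + 1)) * (1 - y * q ^ (2 * n + 2))))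

theorem betaPrefactor_succ (n : ℕ) :
    betaPrefactor q y (n + 1) = prefactorRatio q y n * betaPrefactor q y n := by
  simp only [betaPrefactor, prefactorRatio, mul_add, mul_one, qPoch_succ]
  rw [div_mul_div_comm]
  congr 1 <;> ring

/-- The certificate identity with `u = q^(n-k)` and `x = q^k`, so that `q^n = u * x`. -/
theorem certificateNum_telescoping {u x : ℂ} (hq : q ≠ 0) (hx : x ≠ 0)
    (hE : 1 - q ^ 2 * u * x ^ 2 * y ≠ 0) (hD₁ : 1 - q * u ^ 2 * x ^ 2 * y ≠ 0)
    (hD₂ : 1 - q ^ 2 * u ^ 2 * x ^ 2 * y ≠ 0) :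
    (1 + q * u * x) * (1 + u * x * y) / ((1 - q * u ^ 2 * x ^ 2 * y) * (1 - q ^ 2 * u ^ 2 * x ^ 2 * y)) *
        ((1 - q * u) * (1 - q * u * x ^ 2 * y)) +
      certificateNum q y (u * x) x /
        (x * ((1 - q * u ^ 2 * x ^ 2 * y) * (1 - q ^ 2 * u ^ 2 * x ^ 2 * y))) -
      x * y * (1 - q * u) / (1 - q ^ 2 * u * x ^ 2 * y) *
        (certificateNum q y (u * x) (q * x) /
          (q * x * ((1 - q * u ^ 2 * x ^ 2 * y) * (1 - q ^ 2 * u ^ 2 * x ^ 2 * y)))) = 1 := by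
  unfold certificateNum
  field_simp
  ring

theorem certificate_telescoping (hq : q ≠ 0) (hy₁ : ∀ i, 1 - y * q ^ i ≠ 0) {n k : ℕ} (hk : k ≤ n) :
    prefactorRatio q y n * ((1 - q ^ (n - k + 1)) * (1 - y * q ^ (n + k + 1))) + certificate q y n k -
      y * q ^ k * (1 - q ^ (n - k + 1)) / (1 - y * q ^ (n + k + 2)) * certificate q y n (k + 1) = 1 := by
  obtain ⟨j, rfl⟩ := Nat.exists_eq_add_of_le' hk
  have hE : 1 - q ^ 2 * q ^ j * (q ^ k) ^ 2 * y ≠ 0 := by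
    convert hy₁ (j + k + k + 2) using 2; ring
  have hD₁ : 1 - q * (q ^ j) ^ 2 * (q ^ k) ^ 2 * y ≠ 0 := by
    convert hy₁ (2 * (j + k) + 1) using 2; ring
  have hD₂ : 1 - q ^ 2 * (q ^ j) ^ 2 * (q ^ k) ^ 2 * y ≠ 0 := by
    convert hy₁ (2 * (j + k) + 2) using 2; ring
  have key := certificateNum_telescoping q y hq (pow_ne_zero k hq) hE hD₁ hD₂
  simp only [prefactorRatio, certificate, certificateNum, Nat.add_sub_cancel] at key ⊢
  linear_combination key

theorem certificate_last (hq : q ≠ 0) (hy₁ : ∀ i, 1 - y * q ^ i ≠ 0) (n : ℕ) :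
    certificate q y n (n + 1) = 1 := by
  rw [certificate, div_eq_one_iff_eq (mul_ne_zero (pow_ne_zero _ hq) (mul_ne_zero (hy₁ _) (hy₁ _))),
    certificateNum]
  ring

theorem baileySummand_eq_succ_mul {n k : ℕ} (hk : k ≤ n) (hqk : 1 - q ^ (n - k + 1) ≠ 0)
    (hyk : 1 - y * q ^ (n + k + 1) ≠ 0) :
    baileySummand q y n k =
      baileySummand q y (n + 1) k * ((1 - q ^ (n - k + 1)) * (1 - y * q ^ (n + k + 1))) := by
  rw [baileySummand, baileySummand, Nat.sub_add_comm hk, Nat.add_right_comm, qPoch_succ, qPoch_succ,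
    ← pow_succ', mul_assoc y, ← pow_succ']
  field_simp

theorem baileySummand_succ_succ {n k : ℕ} (hk : k ≤ n) (hqk : 1 - q ^ (n - k + 1) ≠ 0) :
    baileySummand q y (n + 1) (k + 1) =
      baileySummand q y (n + 1) k * (y * q ^ k * (1 - q ^ (n - k + 1)) / (1 - y * q ^ (n + k + 2))) := by
  rw [baileySummand, baileySummand, Nat.triangle_succ, Nat.add_sub_add_right, Nat.sub_add_comm hk,
    qPoch_succ q q (n - k), ← pow_succ', ← add_assoc, qPoch_succ (y * q) q (n + 1 + k)]
  field_simp
  ring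

theorem baileySummand_succ (hq : q ≠ 0) (hq₁ : ∀ i, 1 - q ^ (i + 1) ≠ 0)
    (hy₁ : ∀ i, 1 - y * q ^ i ≠ 0) {n k : ℕ} (hk : k ≤ n) :
    baileySummand q y (n + 1) k = prefactorRatio q y n * baileySummand q y n k +
      (baileySummand q y (n + 1) k * certificate q y n k -
        baileySummand q y (n + 1) (k + 1) * certificate q y n (k + 1)) := by
  rw [baileySummand_eq_succ_mul q y hk (hq₁ _) (hy₁ _), baileySummand_succ_succ q y hk (hq₁ _)]
  linear_combination (-baileySummand q y (n + 1) k) * certificate_telescoping q y hq hy₁ hk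

theorem betaPrefactor_mul_betaSummand_succ (hq : q ≠ 0) (hq₂ : ∀ i, 1 + q ^ (i + 1) ≠ 0)
    (hy₁ : ∀ i, 1 - y * q ^ i ≠ 0) (hy₂ : ∀ i, 1 + y * q ^ i ≠ 0) (n : ℕ) :
    betaPrefactor q y (n + 1) * betaSummand q y (n + 1) =
      baileySummand q y (n + 1) 0 * certificate q y n 0 := by
  have hE : qPoch (-q) q (n + 1) ≠ 0 := qPoch_ne_zero fun i => by
    rw [neg_mul, sub_neg_eq_add, ← pow_succ']; exact hq₂ i
  have hF : qPoch (-y) q (n + 1) ≠ 0 := qPoch_ne_zero fun i => by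
    rw [neg_mul, sub_neg_eq_add]; exact hy₂ i
  have hA : qPoch (y * q) q (2 * n) ≠ 0 := qPoch_ne_zero fun i => by
    rw [mul_assoc, ← pow_succ']; exact hy₁ (i + 1)
  have h₁ : 1 - y ≠ 0 := by simpa using hy₁ 0
  have h₂ := hy₁ (n + 1)
  simp only [betaPrefactor, betaSummand, baileySummand, certificate, certificateNum, qPoch_sq,
    mul_add, mul_one, add_zero, Nat.sub_zero, zero_mul, Nat.zero_div, pow_zero, one_mul]
  rw [qPoch_succ' (y / q), div_mul_cancel₀ y hq, qPoch_succ' y, qPoch_succ' y,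
    qPoch_succ (y * q) q (2 * n + 1), qPoch_succ (y * q) q (2 * n), qPoch_succ (y * q) q n]
  simp only [mul_assoc y q, ← pow_succ']
  -- otherwise `field_simp` rewrites `y * q` to `q * y` inside them and no longer sees `hE`, `hF`, `hA`
  generalize qPoch (-q) q (n + 1) = E at *
  generalize qPoch (-y) q (n + 1) = F at *
  generalize qPoch (y * q) q (2 * n) = A at *
  field_simp
  ring

theorem sum_baileySummand_succ (hq : q ≠ 0) (hq₁ : ∀ i, 1 - q ^ (i + 1) ≠ 0)
    (hy₁ : ∀ i, 1 - y * q ^ i ≠ 0) (n : ℕ) :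
    ∑ k ∈ Finset.range (n + 2), baileySummand q y (n + 1) k =
      prefactorRatio q y n * ∑ k ∈ Finset.range (n + 1), baileySummand q y n k +
        baileySummand q y (n + 1) 0 * certificate q y n 0 := by
  rw [Finset.sum_range_succ, Finset.sum_congr rfl fun k hk =>
      baileySummand_succ q y hq hq₁ hy₁ (Nat.lt_succ_iff.mp (Finset.mem_range.mp hk)),
    Finset.sum_add_distrib, Finset.sum_range_sub', ← Finset.mul_sum, certificate_last q y hq hy₁]
  ring

theorem betaPrefactor_mul_sum_succ (hq : q ≠ 0) (hq₂ : ∀ i, 1 + q ^ (i + 1) ≠ 0)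
    (hy₁ : ∀ i, 1 - y * q ^ i ≠ 0) (hy₂ : ∀ i, 1 + y * q ^ i ≠ 0) (n : ℕ) :
    betaPrefactor q y (n + 1) * ∑ k ∈ Finset.range (n + 2), betaSummand q y k =
      prefactorRatio q y n * (betaPrefactor q y n * ∑ k ∈ Finset.range (n + 1), betaSummand q y k) +
        baileySummand q y (n + 1) 0 * certificate q y n 0 := by
  rw [Finset.sum_range_succ, mul_add, betaPrefactor_mul_betaSummand_succ q y hq hq₂ hy₁ hy₂,
    betaPrefactor_succ, mul_assoc]

theorem betaPrefactor_mul_sum_eq (hq : q ≠ 0) (hq₁ : ∀ i, 1 - q ^ (i + 1) ≠ 0)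
    (hq₂ : ∀ i, 1 + q ^ (i + 1) ≠ 0) (hy₁ : ∀ i, 1 - y * q ^ i ≠ 0)
    (hy₂ : ∀ i, 1 + y * q ^ i ≠ 0) (n : ℕ) :
    betaPrefactor q y n * ∑ k ∈ Finset.range (n + 1), betaSummand q y k =
      ∑ k ∈ Finset.range (n + 1), baileySummand q y n k := by
  induction n with
  | zero => simp [betaPrefactor, betaSummand, baileySummand, qPoch_zero]
  | succ n ih =>
    rw [betaPrefactor_mul_sum_succ q y hq hq₂ hy₁ hy₂, ih, sum_baileySummand_succ q y hq hq₁ hy₁]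

end BaileyPair

theorem stmt_9 (q y : ℂ) (hq0 : 0 < ‖q‖) (hq1 : ‖q‖ < 1)
    (hy : ∀ m : ℕ, y ≠ q ^ (-(m : ℤ)) ∧ y ≠ -q ^ (-(m : ℤ))) (n : ℕ) :
    (qPoch (-q) q n * qPoch (-y) q n / qPoch (y * q) q (2 * n)) *
      ∑ k ∈ Finset.range (n + 1),
        q ^ (2 * k) * qPoch (y / q) q (2 * k) /
          (qPoch (q ^ 2) (q ^ 2) k * qPoch (y ^ 2) (q ^ 2) k) =
    ∑ k ∈ Finset.range (n + 1),
      y ^ k * q ^ (k * (k - 1) / 2) / (qPoch q q (n - k) * qPoch (y * q) q (n + k)) :=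
  BaileyPair.betaPrefactor_mul_sum_eq q y (norm_pos_iff.mp hq0)
    (fun i => sub_ne_zero.mpr (BaileyPair.pow_succ_ne_of_norm_lt_one hq1 norm_one i).symm)
    (fun i h => BaileyPair.pow_succ_ne_of_norm_lt_one hq1 (by simp) i (add_eq_zero_iff_neg_eq.mp h).symm)
    (fun i => BaileyPair.one_sub_mul_pow_ne_zero (hy i).1)
    (fun i => BaileyPair.one_add_mul_pow_ne_zero (hy i).2) n
end

section
/- For every integer m ≥ 0: ∑_{k=0}^m (q;q)_{m+k} q^{2k} / (q²;q²)_k = (q;q²)_{m+1} + q^{m+1} (q²;q²)_m. -/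
namespace Stmt16Aux

noncomputable def Fq (q : ℂ) (m k : ℕ) : ℂ :=
  qPoch q q (m + k) * q ^ (2 * k) / qPoch (q ^ 2) (q ^ 2) k

noncomputable def Rq (q : ℂ) (m : ℕ) : ℂ :=
  qPoch q (q ^ 2) (m + 1) + q ^ (m + 1) * qPoch (q ^ 2) (q ^ 2) m

lemma qPoch_succ (a q : ℂ) (n : ℕ) :
    qPoch a q (n + 1) = qPoch a q n * (1 - a * q ^ n) := Finset.prod_range_succ _ _

variable {q : ℂ}

lemma one_sub_pow_ne (hq1 : ‖q‖ < 1) (n : ℕ) : 1 - q ^ (n + 1) ≠ 0 := by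
  intro h
  have h1 : q ^ (n + 1) = 1 := by linear_combination -h
  have h2 : ‖q ^ (n + 1)‖ < 1 := by
    rw [norm_pow]
    exact pow_lt_one₀ (norm_nonneg q) hq1 (Nat.succ_ne_zero n)
  rw [h1] at h2
  simp at h2

lemma D_ne (hq1 : ‖q‖ < 1) (k : ℕ) : qPoch (q ^ 2) (q ^ 2) k ≠ 0 := by
  unfold qPoch
  refine Finset.prod_ne_zero_iff.mpr fun i _ => ?_
  have h : (q ^ 2) * (q ^ 2) ^ i = q ^ (2 * i + 1 + 1) := by ring
  rw [h]
  exact one_sub_pow_ne hq1 _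

lemma split (q : ℂ) : ∀ k, qPoch q q (2 * k) = qPoch q (q ^ 2) k * qPoch (q ^ 2) (q ^ 2) k := by
  intro k
  induction k with
  | zero => simp [qPoch]
  | succ n ih =>
    rw [show 2 * (n + 1) = 2 * n + 1 + 1 by ring, qPoch_succ, qPoch_succ, ih,
        qPoch_succ, qPoch_succ]
    ring

lemma step (hq1 : ‖q‖ < 1) (m k : ℕ) :
    (q - q ^ (2 * m + 3)) * Fq q m k + (q ^ (2 * m + 5) - (1 + q)) * Fq q (m + 1) k
      + Fq q (m + 2) k
    = q ^ (2 * m + 3) * (1 - q ^ (2 * (k + 1))) * Fq q m (k + 1)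
      - q ^ (2 * m + 3) * (1 - q ^ (2 * k)) * Fq q m k := by
  have hD := D_ne hq1 k
  have hsub : (1 : ℂ) - q ^ 2 * (q ^ 2) ^ k ≠ 0 := by
    have h : (q ^ 2) * (q ^ 2) ^ k = q ^ (2 * k + 1 + 1) := by ring
    rw [h]
    exact one_sub_pow_ne hq1 _
  unfold Fq
  rw [show m + 1 + k = m + k + 1 by ring, show m + 2 + k = m + k + 1 + 1 by ring,
      show m + (k + 1) = m + k + 1 by ring,
      qPoch_succ q q (m + k + 1), qPoch_succ q q (m + k),
      qPoch_succ (q ^ 2) (q ^ 2) k]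
  field_simp
  ring

lemma recur (hq1 : ‖q‖ < 1) (m : ℕ) :
    (q - q ^ (2 * m + 3)) * (∑ k ∈ Finset.range (m + 1), Fq q m k)
      + (q ^ (2 * m + 5) - (1 + q)) * (∑ k ∈ Finset.range (m + 2), Fq q (m + 1) k)
      + (∑ k ∈ Finset.range (m + 3), Fq q (m + 2) k)
    = q ^ (2 * m + 3) * (1 - q ^ (2 * (m + 3))) * Fq q m (m + 3)
      - (q - q ^ (2 * m + 3)) * (Fq q m (m + 1) + Fq q m (m + 2))
      - (q ^ (2 * m + 5) - (1 + q)) * Fq q (m + 1) (m + 2) := by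
  have tel : ∀ n : ℕ, ∑ k ∈ Finset.range n,
      ((q - q ^ (2 * m + 3)) * Fq q m k + (q ^ (2 * m + 5) - (1 + q)) * Fq q (m + 1) k
        + Fq q (m + 2) k)
      = q ^ (2 * m + 3) * (1 - q ^ (2 * n)) * Fq q m n
        - q ^ (2 * m + 3) * (1 - q ^ (2 * 0)) * Fq q m 0 := by
    intro n
    induction n with
    | zero => simp
    | succ p ih =>
      rw [Finset.sum_range_succ, ih]
      linear_combination step hq1 m p
  have t3 := tel (m + 3)
  simp only [Finset.sum_add_distrib] at t3
  simp only [← Finset.mul_sum] at t3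
  have a1 : ∑ k ∈ Finset.range (m + 3), Fq q m k
      = (∑ k ∈ Finset.range (m + 2), Fq q m k) + Fq q m (m + 2) :=
    Finset.sum_range_succ _ _
  have a2 : ∑ k ∈ Finset.range (m + 2), Fq q m k
      = (∑ k ∈ Finset.range (m + 1), Fq q m k) + Fq q m (m + 1) :=
    Finset.sum_range_succ _ _
  have a3 : ∑ k ∈ Finset.range (m + 3), Fq q (m + 1) k
      = (∑ k ∈ Finset.range (m + 2), Fq q (m + 1) k) + Fq q (m + 1) (m + 2) :=
    Finset.sum_range_succ _ _
  rw [a1, a2, a3] at t3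
  linear_combination t3

set_option maxHeartbeats 1600000 in
lemma Rident (hq1 : ‖q‖ < 1) (m : ℕ) :
    (q - q ^ (2 * m + 3)) * Rq q m + (q ^ (2 * m + 5) - (1 + q)) * Rq q (m + 1) + Rq q (m + 2)
    = q ^ (2 * m + 3) * (1 - q ^ (2 * (m + 3))) * Fq q m (m + 3)
      - (q - q ^ (2 * m + 3)) * (Fq q m (m + 1) + Fq q m (m + 2))
      - (q ^ (2 * m + 5) - (1 + q)) * Fq q (m + 1) (m + 2) := by
  have hY : qPoch (q ^ 2) (q ^ 2) m ≠ 0 := D_ne hq1 m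
  have h2 : (1 : ℂ) - q ^ (2 * m + 2) ≠ 0 := by
    have := one_sub_pow_ne hq1 (2 * m + 1); rwa [show 2 * m + 1 + 1 = 2 * m + 2 from rfl] at this
  have h4 : (1 : ℂ) - q ^ (2 * m + 4) ≠ 0 := by
    have := one_sub_pow_ne hq1 (2 * m + 3); rwa [show 2 * m + 3 + 1 = 2 * m + 4 from rfl] at this
  have h6 : (1 : ℂ) - q ^ (2 * m + 6) ≠ 0 := by
    have := one_sub_pow_ne hq1 (2 * m + 5); rwa [show 2 * m + 5 + 1 = 2 * m + 6 from rfl] at this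
  have k1 : qPoch q q (2 * m + 1) = qPoch q (q ^ 2) (m + 1) * qPoch (q ^ 2) (q ^ 2) m := by
    rw [qPoch_succ q q (2 * m), split q m, qPoch_succ q (q ^ 2) m]; ring
  have k2 : qPoch q q (2 * m + 2)
      = qPoch q (q ^ 2) (m + 1) * qPoch (q ^ 2) (q ^ 2) m * (1 - q ^ (2 * m + 2)) := by
    rw [show (2 * m + 2 : ℕ) = 2 * m + 1 + 1 from rfl, qPoch_succ q q (2 * m + 1), k1]; ring
  have k3 : qPoch q q (2 * m + 3)
      = qPoch q (q ^ 2) (m + 1) * qPoch (q ^ 2) (q ^ 2) m * (1 - q ^ (2 * m + 2))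
        * (1 - q ^ (2 * m + 3)) := by
    rw [show (2 * m + 3 : ℕ) = 2 * m + 2 + 1 from rfl, qPoch_succ q q (2 * m + 2), k2]; ring
  have d1 : qPoch (q ^ 2) (q ^ 2) (m + 1)
      = qPoch (q ^ 2) (q ^ 2) m * (1 - q ^ (2 * m + 2)) := by
    rw [qPoch_succ]; ring
  have d2 : qPoch (q ^ 2) (q ^ 2) (m + 2)
      = qPoch (q ^ 2) (q ^ 2) m * (1 - q ^ (2 * m + 2)) * (1 - q ^ (2 * m + 4)) := by
    rw [show (m + 2 : ℕ) = m + 1 + 1 from rfl, qPoch_succ (q ^ 2) (q ^ 2) (m + 1), d1]; ring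
  have d3 : qPoch (q ^ 2) (q ^ 2) (m + 3)
      = qPoch (q ^ 2) (q ^ 2) m * (1 - q ^ (2 * m + 2)) * (1 - q ^ (2 * m + 4))
        * (1 - q ^ (2 * m + 6)) := by
    rw [show (m + 3 : ℕ) = m + 2 + 1 from rfl, qPoch_succ (q ^ 2) (q ^ 2) (m + 2), d2]; ring
  have o2 : qPoch q (q ^ 2) (m + 1 + 1) = qPoch q (q ^ 2) (m + 1) * (1 - q ^ (2 * m + 3)) := by
    rw [qPoch_succ]; ring
  have o3 : qPoch q (q ^ 2) (m + 2 + 1)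
      = qPoch q (q ^ 2) (m + 1) * (1 - q ^ (2 * m + 3)) * (1 - q ^ (2 * m + 5)) := by
    rw [qPoch_succ q (q ^ 2) (m + 2), show (m + 2 : ℕ) = m + 1 + 1 from rfl, o2]; ring
  have f1 : Fq q m (m + 1) = qPoch q (q ^ 2) (m + 1) * q ^ (2 * (m + 1)) / (1 - q ^ (2 * m + 2)) := by
    unfold Fq
    rw [show m + (m + 1) = 2 * m + 1 by omega, k1, d1]
    field_simp
  have f2 : Fq q m (m + 2) = qPoch q (q ^ 2) (m + 1) * q ^ (2 * (m + 2))
      / (1 - q ^ (2 * m + 4)) := by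
    unfold Fq
    rw [show m + (m + 2) = 2 * m + 2 by omega, k2, d2]
    rw [div_eq_div_iff (by exact mul_ne_zero (mul_ne_zero hY h2) h4) h4]
    ring
  have f3 : Fq q (m + 1) (m + 2) = qPoch q (q ^ 2) (m + 1) * (1 - q ^ (2 * m + 3)) * q ^ (2 * (m + 2))
      / (1 - q ^ (2 * m + 4)) := by
    unfold Fq
    rw [show m + 1 + (m + 2) = 2 * m + 3 by omega, k3, d2]
    rw [div_eq_div_iff (by exact mul_ne_zero (mul_ne_zero hY h2) h4) h4]
    ring
  have f4 : Fq q m (m + 3) = qPoch q (q ^ 2) (m + 1) * (1 - q ^ (2 * m + 3)) * q ^ (2 * (m + 3))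
      / ((1 - q ^ (2 * m + 4)) * (1 - q ^ (2 * m + 6))) := by
    unfold Fq
    rw [show m + (m + 3) = 2 * m + 3 by omega, k3, d3]
    rw [div_eq_div_iff (by exact mul_ne_zero (mul_ne_zero (mul_ne_zero hY h2) h4) h6)
      (mul_ne_zero h4 h6)]
    ring
  rw [f1, f2, f3, f4]
  unfold Rq
  rw [o2, o3, d1, d2]
  field_simp [h2, h4, h6]
  ring

lemma step2 (hq1 : ‖q‖ < 1) (m : ℕ)
    (h0 : ∑ k ∈ Finset.range (m + 1), Fq q m k = Rq q m)
    (h1 : ∑ k ∈ Finset.range (m + 2), Fq q (m + 1) k = Rq q (m + 1)) :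
    ∑ k ∈ Finset.range (m + 3), Fq q (m + 2) k = Rq q (m + 2) := by
  linear_combination recur hq1 m - Rident hq1 m - (q - q ^ (2 * m + 3)) * h0
    - (q ^ (2 * m + 5) - (1 + q)) * h1

lemma key (hq1 : ‖q‖ < 1) : ∀ n, ∑ k ∈ Finset.range (n + 1), Fq q n k = Rq q n := by
  have H : ∀ n, (∑ k ∈ Finset.range (n + 1), Fq q n k = Rq q n) ∧
      (∑ k ∈ Finset.range (n + 2), Fq q (n + 1) k = Rq q (n + 1)) := by
    intro n
    induction n with
    | zero =>
      constructor
      · simp [Fq, Rq, qPoch]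
      · have h2 : (1 : ℂ) - q ^ 2 ≠ 0 := by
          have := one_sub_pow_ne hq1 1; rwa [show (1 + 1 : ℕ) = 2 from rfl] at this
        simp only [Fq, Rq, qPoch, Finset.sum_range_succ, Finset.prod_range_succ,
          Finset.sum_range_zero, Finset.prod_range_zero, pow_zero, mul_one, one_mul]
        field_simp
        ring
    | succ p ih =>
      exact ⟨ih.2, step2 hq1 p ih.1 ih.2⟩
  exact fun n => (H n).1

end Stmt16Aux

theorem stmt_16 (q : ℂ) (m : ℕ) (hq0 : 0 < ‖q‖) (hq1 : ‖q‖ < 1) :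
    ∑ k ∈ Finset.range (m + 1), qPoch q q (m + k) * q ^ (2 * k) / qPoch (q ^ 2) (q ^ 2) k =
    qPoch q (q ^ 2) (m + 1) + q ^ (m + 1) * qPoch (q ^ 2) (q ^ 2) m := by
  exact Stmt16Aux.key hq1 m
end

section
/- Define U_m(x) = ∑_{k=0}^m [m+k choose k]_q x^k / (-q;q)_k. Then for every m ≥ 0: (1-q^{m+2}) U_{m+2}(x) + (xq^{2m+3} - q - 1) U_{m+1}(x) + q(1+q^{m+1}) U_m(x) = (x-q) x^{m+1} (q^{m+2};q)_m / (q²;q²)_m. -/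
section
variable (q : ℂ) (hq1 : ‖q‖ < 1)
include hq1

lemma one_sub_ne (n : ℕ) : (1 : ℂ) - q ^ (n+1) ≠ 0 := by
  intro h
  have h1 : q ^ (n+1) = 1 := by linear_combination -h
  have h2 : ‖q ^ (n+1)‖ < 1 := by
    rw [norm_pow]; exact pow_lt_one₀ (norm_nonneg q) hq1 (Nat.succ_ne_zero n)
  rw [h1, norm_one] at h2; exact lt_irrefl 1 h2

lemma one_add_ne (n : ℕ) : (1 : ℂ) + q ^ (n+1) ≠ 0 := by
  intro h
  have h1 : q ^ (n+1) = -1 := by linear_combination h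
  have h2 : ‖q ^ (n+1)‖ < 1 := by
    rw [norm_pow]; exact pow_lt_one₀ (norm_nonneg q) hq1 (Nat.succ_ne_zero n)
  rw [h1] at h2; simp at h2

end

lemma qPochP_succ (q : ℂ) (n : ℕ) : qPoch q q (n+1) = qPoch q q n * (1 - q ^ (n+1)) := by
  rw [qPoch, Finset.prod_range_succ, ← qPoch, pow_succ']

lemma qPochN_succ (q : ℂ) (n : ℕ) : qPoch (-q) q (n+1) = qPoch (-q) q n * (1 + q ^ (n+1)) := by
  rw [qPoch, Finset.prod_range_succ, ← qPoch, pow_succ']; ring_nf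

lemma qPochP_ne (q : ℂ) (hq1 : ‖q‖ < 1) (n : ℕ) : qPoch q q n ≠ 0 := by
  induction n with
  | zero => simp [qPoch]
  | succ k ih => rw [qPochP_succ]; exact mul_ne_zero ih (one_sub_ne q hq1 k)

lemma qPochN_ne (q : ℂ) (hq1 : ‖q‖ < 1) (n : ℕ) : qPoch (-q) q n ≠ 0 := by
  induction n with
  | zero => simp [qPoch]
  | succ k ih => rw [qPochN_succ]; exact mul_ne_zero ih (one_add_ne q hq1 k)

lemma qBinom_val (q : ℂ) (j k : ℕ) :
    qBinom q (j+k) k = qPoch q q (j+k) / (qPoch q q k * qPoch q q j) := by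
  rw [qBinom, if_pos (Nat.le_add_left k j), show j + k - k = j from by omega]

lemma qPoch_split (q : ℂ) (m : ℕ) :
    qPoch (q ^ (m+2)) q m * qPoch q q (m+1) = qPoch q q (2*m+1) := by
  have h : 2*m+1 = (m+1) + m := by omega
  rw [h]
  conv_rhs => rw [qPoch, Finset.prod_range_add, ← qPoch]
  rw [mul_comm]
  congr 1
  rw [qPoch]
  apply Finset.prod_congr rfl
  intro i _
  have h2 : m + 2 + i = (m+1+i)+1 := by omega
  rw [← pow_add, h2, pow_succ']

lemma qPoch_even (q : ℂ) (m : ℕ) :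
    qPoch (q^2) (q^2) m = qPoch q q m * qPoch (-q) q m := by
  rw [qPoch, qPoch, qPoch, ← Finset.prod_mul_distrib]
  apply Finset.prod_congr rfl
  intro i _
  ring

lemma qBinom_zero (q : ℂ) (hq1 : ‖q‖ < 1) (n : ℕ) : qBinom q n 0 = 1 := by
  rw [qBinom, if_pos (Nat.zero_le n)]
  have h0 : qPoch q q 0 = 1 := by simp [qPoch]
  rw [h0, Nat.sub_zero, one_mul, div_self (qPochP_ne q hq1 n)]

section KeyTerms
variable (q : ℂ) (hq1 : ‖q‖ < 1) (m l : ℕ)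
include hq1

lemma hDkey : qPoch q q (l+1) * qPoch q q (m+2) * qPoch (-q) q (l+1) ≠ 0 :=
  mul_ne_zero (mul_ne_zero (qPochP_ne q hq1 _) (qPochP_ne q hq1 _)) (qPochN_ne q hq1 _)

lemma T2eq : qBinom q (m+2+(l+1)) (l+1) / qPoch (-q) q (l+1)
    = qPoch q q (m+1+l) / (qPoch q q (l+1) * qPoch q q (m+2) * qPoch (-q) q (l+1))
      * ((1 - q^(m+1+l+1)) * (1 - q^(m+1+l+1+1))) := by
  have e2 : qPoch q q (m+2+(l+1)) =
      qPoch q q (m+1+l) * (1 - q^(m+1+l+1)) * (1 - q^(m+1+l+1+1)) := by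
    rw [show m+2+(l+1) = (m+1+l)+1+1 from by omega, qPochP_succ, qPochP_succ]
  rw [qBinom_val, div_div, div_mul_eq_mul_div,
    div_eq_div_iff (hDkey q hq1 m l) (hDkey q hq1 m l), e2]
  ring

lemma T1leq : qBinom q (m+1+l) l / qPoch (-q) q l
    = qPoch q q (m+1+l) / (qPoch q q (l+1) * qPoch q q (m+2) * qPoch (-q) q (l+1))
      * ((1 - q^(l+1)) * (1 + q^(l+1)) * (1 - q^(m+1+1))) := by
  have hD2 : qPoch q q l * qPoch q q (m+1) * qPoch (-q) q l ≠ 0 :=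
    mul_ne_zero (mul_ne_zero (qPochP_ne q hq1 _) (qPochP_ne q hq1 _)) (qPochN_ne q hq1 _)
  rw [qBinom_val, div_div, div_mul_eq_mul_div,
    div_eq_div_iff hD2 (hDkey q hq1 m l), qPochP_succ q l, qPochN_succ q l,
    show m+2 = m+1+1 from rfl, qPochP_succ q (m+1)]
  ring

lemma T1eq : qBinom q (m+1+(l+1)) (l+1) / qPoch (-q) q (l+1)
    = qPoch q q (m+1+l) / (qPoch q q (l+1) * qPoch q q (m+2) * qPoch (-q) q (l+1))
      * ((1 - q^(m+1+l+1)) * (1 - q^(m+1+1))) := by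
  have e1 : qPoch q q (m+1+(l+1)) = qPoch q q (m+1+l) * (1 - q^(m+1+l+1)) := by
    rw [show m+1+(l+1) = (m+1+l)+1 from by omega, qPochP_succ]
  have hD2 : qPoch q q (l+1) * qPoch q q (m+1) * qPoch (-q) q (l+1) ≠ 0 :=
    mul_ne_zero (mul_ne_zero (qPochP_ne q hq1 _) (qPochP_ne q hq1 _)) (qPochN_ne q hq1 _)
  rw [qBinom_val, div_div, div_mul_eq_mul_div,
    div_eq_div_iff hD2 (hDkey q hq1 m l), e1,
    show m+2 = m+1+1 from rfl, qPochP_succ q (m+1)]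
  ring

lemma T0eq : qBinom q (m+(l+1)) (l+1) / qPoch (-q) q (l+1)
    = qPoch q q (m+1+l) / (qPoch q q (l+1) * qPoch q q (m+2) * qPoch (-q) q (l+1))
      * ((1 - q^(m+1)) * (1 - q^(m+1+1))) := by
  have e0 : qPoch q q (m+(l+1)) = qPoch q q (m+1+l) := by
    rw [show m+(l+1) = m+1+l from by omega]
  have hD2 : qPoch q q (l+1) * qPoch q q m * qPoch (-q) q (l+1) ≠ 0 :=
    mul_ne_zero (mul_ne_zero (qPochP_ne q hq1 _) (qPochP_ne q hq1 _)) (qPochN_ne q hq1 _)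
  rw [qBinom_val, div_div, div_mul_eq_mul_div,
    div_eq_div_iff hD2 (hDkey q hq1 m l), e0,
    show m+2 = m+1+1 from rfl, qPochP_succ q (m+1), qPochP_succ q m]
  ring

lemma key : (1 - q^(m+2)) * (qBinom q (m+2+(l+1)) (l+1) / qPoch (-q) q (l+1))
    + q^(2*m+3) * (qBinom q (m+1+l) l / qPoch (-q) q l)
    - (1+q) * (qBinom q (m+1+(l+1)) (l+1) / qPoch (-q) q (l+1))
    + q*(1+q^(m+1)) * (qBinom q (m+(l+1)) (l+1) / qPoch (-q) q (l+1)) = 0 := by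
  rw [T2eq q hq1 m l, T1leq q hq1 m l, T1eq q hq1 m l, T0eq q hq1 m l]
  ring

end KeyTerms

section Bnd
variable (q : ℂ) (hq1 : ‖q‖ < 1) (m : ℕ)
include hq1

lemma hDF1 : qPoch q q (m+2) * qPoch q q (m+1) * qPoch (-q) q (m+1) ≠ 0 :=
  mul_ne_zero (mul_ne_zero (qPochP_ne q hq1 _) (qPochP_ne q hq1 _)) (qPochN_ne q hq1 _)

lemma hDF2 : qPoch q q (m+2) * qPoch q q (m+2) * qPoch (-q) q (m+2) ≠ 0 :=
  mul_ne_zero (mul_ne_zero (qPochP_ne q hq1 _) (qPochP_ne q hq1 _)) (qPochN_ne q hq1 _)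

lemma Ceq1 : qPoch (q^(m+2)) q m / qPoch (q^2) (q^2) m
    = qPoch q q (2*m+1) / (qPoch q q (m+2) * qPoch q q (m+1) * qPoch (-q) q (m+1))
      * ((1 - q^(m+1)) * (1 - q^(m+1+1)) * (1 + q^(m+1))) := by
  have hs : qPoch (q^(m+2)) q m = qPoch q q (2*m+1) / qPoch q q (m+1) := by
    rw [eq_div_iff (qPochP_ne q hq1 (m+1))]; exact qPoch_split q m
  have hD2 : qPoch q q (m+1) * (qPoch q q m * qPoch (-q) q m) ≠ 0 :=
    mul_ne_zero (qPochP_ne q hq1 _) (mul_ne_zero (qPochP_ne q hq1 _) (qPochN_ne q hq1 _))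
  rw [hs, qPoch_even, div_div, div_mul_eq_mul_div,
    div_eq_div_iff hD2 (hDF1 q hq1 m),
    show m+2 = m+1+1 from rfl, qPochP_succ q (m+1), qPochP_succ q m, qPochN_succ q m]
  ring

lemma Ceq2 : qPoch (q^(m+2)) q m / qPoch (q^2) (q^2) m
    = qPoch q q (2*m+1) / (qPoch q q (m+2) * qPoch q q (m+2) * qPoch (-q) q (m+2))
      * ((1 - q^(m+1)) * (1 + q^(m+1)) * (1 - q^(m+1+1)) * (1 - q^(m+1+1)) * (1 + q^(m+1+1))) := by
  have hs : qPoch (q^(m+2)) q m = qPoch q q (2*m+1) / qPoch q q (m+1) := by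
    rw [eq_div_iff (qPochP_ne q hq1 (m+1))]; exact qPoch_split q m
  have hD2 : qPoch q q (m+1) * (qPoch q q m * qPoch (-q) q m) ≠ 0 :=
    mul_ne_zero (qPochP_ne q hq1 _) (mul_ne_zero (qPochP_ne q hq1 _) (qPochN_ne q hq1 _))
  rw [hs, qPoch_even, div_div, div_mul_eq_mul_div,
    div_eq_div_iff hD2 (hDF2 q hq1 m),
    show m+2 = m+1+1 from rfl, qPochP_succ q (m+1), qPochP_succ q m,
    qPochN_succ q (m+1), qPochN_succ q m]
  ring

lemma t1eq : qBinom q (m+2+(m+1)) (m+1) / qPoch (-q) q (m+1)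
    = qPoch q q (2*m+1) / (qPoch q q (m+2) * qPoch q q (m+1) * qPoch (-q) q (m+1))
      * ((1 - q^(2*m+1+1)) * (1 - q^(2*m+1+1+1))) := by
  have e5 : qPoch q q (m+2+(m+1)) =
      qPoch q q (2*m+1) * (1-q^(2*m+1+1)) * (1-q^(2*m+1+1+1)) := by
    rw [show m+2+(m+1) = (2*m+1)+1+1 from by omega, qPochP_succ, qPochP_succ]
  have hD2 : qPoch q q (m+1) * qPoch q q (m+2) * qPoch (-q) q (m+1) ≠ 0 :=
    mul_ne_zero (mul_ne_zero (qPochP_ne q hq1 _) (qPochP_ne q hq1 _)) (qPochN_ne q hq1 _)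
  rw [qBinom_val, div_div, div_mul_eq_mul_div, div_eq_div_iff hD2 (hDF1 q hq1 m), e5]
  ring

lemma t2eq : qBinom q (m+1+m) m / qPoch (-q) q m
    = qPoch q q (2*m+1) / (qPoch q q (m+2) * qPoch q q (m+1) * qPoch (-q) q (m+1))
      * ((1 - q^(m+1)) * (1 - q^(m+1+1)) * (1 + q^(m+1))) := by
  have e6 : qPoch q q (m+1+m) = qPoch q q (2*m+1) := by
    rw [show m+1+m = 2*m+1 from by omega]
  have hD2 : qPoch q q m * qPoch q q (m+1) * qPoch (-q) q m ≠ 0 :=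
    mul_ne_zero (mul_ne_zero (qPochP_ne q hq1 _) (qPochP_ne q hq1 _)) (qPochN_ne q hq1 _)
  rw [qBinom_val, div_div, div_mul_eq_mul_div, div_eq_div_iff hD2 (hDF1 q hq1 m), e6,
    show m+2 = m+1+1 from rfl, qPochP_succ q (m+1), qPochP_succ q m, qPochN_succ q m]
  ring

lemma t3eq : qBinom q (m+1+(m+1)) (m+1) / qPoch (-q) q (m+1)
    = qPoch q q (2*m+1) / (qPoch q q (m+2) * qPoch q q (m+1) * qPoch (-q) q (m+1))
      * ((1 - q^(2*m+1+1)) * (1 - q^(m+1+1))) := by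
  have e3 : qPoch q q (m+1+(m+1)) = qPoch q q (2*m+1) * (1-q^(2*m+1+1)) := by
    rw [show m+1+(m+1) = (2*m+1)+1 from by omega, qPochP_succ]
  have hD2 : qPoch q q (m+1) * qPoch q q (m+1) * qPoch (-q) q (m+1) ≠ 0 :=
    mul_ne_zero (mul_ne_zero (qPochP_ne q hq1 _) (qPochP_ne q hq1 _)) (qPochN_ne q hq1 _)
  rw [qBinom_val, div_div, div_mul_eq_mul_div, div_eq_div_iff hD2 (hDF1 q hq1 m), e3,
    show m+2 = m+1+1 from rfl, qPochP_succ q (m+1)]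
  ring

lemma s1eq : qBinom q (m+2+(m+2)) (m+2) / qPoch (-q) q (m+2)
    = qPoch q q (2*m+1) / (qPoch q q (m+2) * qPoch q q (m+2) * qPoch (-q) q (m+2))
      * ((1 - q^(2*m+1+1)) * (1 - q^(2*m+1+1+1)) * (1 - q^(2*m+1+1+1+1))) := by
  have e4 : qPoch q q (m+2+(m+2)) =
      qPoch q q (2*m+1) * (1-q^(2*m+1+1)) * (1-q^(2*m+1+1+1)) * (1-q^(2*m+1+1+1+1)) := by
    rw [show m+2+(m+2) = (2*m+1)+1+1+1 from by omega, qPochP_succ, qPochP_succ, qPochP_succ]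
  rw [qBinom_val, div_div, div_mul_eq_mul_div, div_eq_div_iff (hDF2 q hq1 m) (hDF2 q hq1 m), e4]
  ring

lemma s2eq : qBinom q (m+1+(m+1)) (m+1) / qPoch (-q) q (m+1)
    = qPoch q q (2*m+1) / (qPoch q q (m+2) * qPoch q q (m+2) * qPoch (-q) q (m+2))
      * ((1 - q^(2*m+1+1)) * (1 - q^(m+1+1)) * (1 - q^(m+1+1)) * (1 + q^(m+1+1))) := by
  have e3 : qPoch q q (m+1+(m+1)) = qPoch q q (2*m+1) * (1-q^(2*m+1+1)) := by
    rw [show m+1+(m+1) = (2*m+1)+1 from by omega, qPochP_succ]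
  have hD2 : qPoch q q (m+1) * qPoch q q (m+1) * qPoch (-q) q (m+1) ≠ 0 :=
    mul_ne_zero (mul_ne_zero (qPochP_ne q hq1 _) (qPochP_ne q hq1 _)) (qPochN_ne q hq1 _)
  rw [qBinom_val, div_div, div_mul_eq_mul_div, div_eq_div_iff hD2 (hDF2 q hq1 m), e3,
    show m+2 = m+1+1 from rfl, qPochP_succ q (m+1), qPochN_succ q (m+1)]
  ring

lemma bnd1 : (1 - q^(m+2)) * (qBinom q (m+2+(m+1)) (m+1) / qPoch (-q) q (m+1))
    + q^(2*m+3) * (qBinom q (m+1+m) m / qPoch (-q) q m)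
    - (1+q) * (qBinom q (m+1+(m+1)) (m+1) / qPoch (-q) q (m+1))
    = -q * (qPoch (q^(m+2)) q m / qPoch (q^2) (q^2) m) := by
  rw [t1eq q hq1 m, t2eq q hq1 m, t3eq q hq1 m, Ceq1 q hq1 m]
  ring

lemma bnd2 : (1 - q^(m+2)) * (qBinom q (m+2+(m+2)) (m+2) / qPoch (-q) q (m+2))
    + q^(2*m+3) * (qBinom q (m+1+(m+1)) (m+1) / qPoch (-q) q (m+1))
    = qPoch (q^(m+2)) q m / qPoch (q^2) (q^2) m := by
  rw [s1eq q hq1 m, s2eq q hq1 m, Ceq2 q hq1 m]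
  ring

end Bnd

theorem stmt_17 (q x : ℂ) (m : ℕ) (hq0 : 0 < ‖q‖) (hq1 : ‖q‖ < 1)
    (U : ℕ → ℂ)
    (hU : ∀ j, U j = ∑ k ∈ Finset.range (j + 1), qBinom q (j + k) k * x ^ k / qPoch (-q) q k) :
    (1 - q ^ (m + 2)) * U (m + 2) + (x * q ^ (2 * m + 3) - q - 1) * U (m + 1) +
        q * (1 + q ^ (m + 1)) * U m =
    (x - q) * x ^ (m + 1) * qPoch (q ^ (m + 2)) q m / qPoch (q ^ 2) (q ^ 2) m := by
  rw [hU, hU, hU]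
  have d2 : (∑ k ∈ Finset.range (m + 2 + 1), qBinom q (m + 2 + k) k * x ^ k / qPoch (-q) q k)
      = ((∑ i ∈ Finset.range m, qBinom q (m + 2 + (i + 1)) (i + 1) * x ^ (i + 1) / qPoch (-q) q (i + 1))
          + qBinom q (m + 2 + 0) 0 * x ^ 0 / qPoch (-q) q 0)
        + qBinom q (m + 2 + (m + 1)) (m + 1) * x ^ (m + 1) / qPoch (-q) q (m + 1)
        + qBinom q (m + 2 + (m + 2)) (m + 2) * x ^ (m + 2) / qPoch (-q) q (m + 2) := by
    rw [Finset.sum_range_succ, Finset.sum_range_succ, Finset.sum_range_succ']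
  have d1a : (∑ k ∈ Finset.range (m + 1 + 1), qBinom q (m + 1 + k) k * x ^ k / qPoch (-q) q k)
      = (∑ i ∈ Finset.range m, qBinom q (m + 1 + i) i * x ^ i / qPoch (-q) q i)
        + qBinom q (m + 1 + m) m * x ^ m / qPoch (-q) q m
        + qBinom q (m + 1 + (m + 1)) (m + 1) * x ^ (m + 1) / qPoch (-q) q (m + 1) := by
    rw [Finset.sum_range_succ, Finset.sum_range_succ]
  have d1b : (∑ k ∈ Finset.range (m + 1 + 1), qBinom q (m + 1 + k) k * x ^ k / qPoch (-q) q k)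
      = ((∑ i ∈ Finset.range m, qBinom q (m + 1 + (i + 1)) (i + 1) * x ^ (i + 1) / qPoch (-q) q (i + 1))
          + qBinom q (m + 1 + 0) 0 * x ^ 0 / qPoch (-q) q 0)
        + qBinom q (m + 1 + (m + 1)) (m + 1) * x ^ (m + 1) / qPoch (-q) q (m + 1) := by
    rw [Finset.sum_range_succ, Finset.sum_range_succ']
  have d0 : (∑ k ∈ Finset.range (m + 1), qBinom q (m + k) k * x ^ k / qPoch (-q) q k)
      = (∑ i ∈ Finset.range m, qBinom q (m + (i + 1)) (i + 1) * x ^ (i + 1) / qPoch (-q) q (i + 1))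
        + qBinom q (m + 0) 0 * x ^ 0 / qPoch (-q) q 0 := by
    rw [Finset.sum_range_succ']
  have hsplit :
      (1 - q ^ (m + 2)) * (∑ i ∈ Finset.range m, qBinom q (m + 2 + (i + 1)) (i + 1) * x ^ (i + 1) / qPoch (-q) q (i + 1))
      + q ^ (2 * m + 3) * x * (∑ i ∈ Finset.range m, qBinom q (m + 1 + i) i * x ^ i / qPoch (-q) q i)
      - (1 + q) * (∑ i ∈ Finset.range m, qBinom q (m + 1 + (i + 1)) (i + 1) * x ^ (i + 1) / qPoch (-q) q (i + 1))
      + q * (1 + q ^ (m + 1)) * (∑ i ∈ Finset.range m, qBinom q (m + (i + 1)) (i + 1) * x ^ (i + 1) / qPoch (-q) q (i + 1))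
      = 0 := by
    rw [Finset.mul_sum, Finset.mul_sum, Finset.mul_sum, Finset.mul_sum,
      ← Finset.sum_add_distrib, ← Finset.sum_sub_distrib, ← Finset.sum_add_distrib]
    apply Finset.sum_eq_zero
    intro l _
    linear_combination (x ^ (l + 1)) * key q hq1 m l
  have bnd0 : (1 - q ^ (m + 2)) * (qBinom q (m + 2 + 0) 0 * x ^ 0 / qPoch (-q) q 0)
      - (1 + q) * (qBinom q (m + 1 + 0) 0 * x ^ 0 / qPoch (-q) q 0)
      + q * (1 + q ^ (m + 1)) * (qBinom q (m + 0) 0 * x ^ 0 / qPoch (-q) q 0) = 0 := by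
    rw [qBinom_zero q hq1, qBinom_zero q hq1, qBinom_zero q hq1]
    have h0 : qPoch (-q) q 0 = 1 := by simp [qPoch]
    rw [h0]
    ring
  linear_combination (1 - q ^ (m + 2)) * d2 + (x * q ^ (2 * m + 3)) * d1a - (1 + q) * d1b
    + (q * (1 + q ^ (m + 1))) * d0 + hsplit + bnd0
    + x ^ (m + 1) * bnd1 q hq1 m + x ^ (m + 2) * bnd2 q hq1 m
end
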